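/- arXiv:2312.07908 — 7 statements merged into one kernel-verified Lean document; each statement's English description precedes it below -/
import Mathlib

section
/- For every L ≥ 0 and ρ > 0 there exists a constant γ > 0, depending only on L and ρ, with the following property: for every function ψ : ℝ → ℝ and every G ≥ 0 such that |ψ(t) − ψ(0) + t·G²| ≤ (L/2)·t²·G² for all t ≥ 0 with t·G ≤ ρ, there exists t ≥ 0 with ψ(t) − ψ(0) ≤ −γ·G·min{1, G}. -/
/-- abstract line-search sufficient-decrease lemma (Proposition 3.1):
for every `L ≥ 0` and `ρ > 0` there is `γ > 0`, depending only on `L` and `ρ`, such that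
for any `ψ : ℝ → ℝ` and `G ≥ 0` with
`|ψ(t) − ψ(0) + t·G²| ≤ (L/2)·t²·G²` whenever `t ≥ 0` and `t·G ≤ ρ`,
some `t ≥ 0` achieves `ψ(t) − ψ(0) ≤ −γ·G·min{1, G}`. -/
theorem stmt2 (L ρ : ℝ) (hL : 0 ≤ L) (hρ : 0 < ρ) :
    ∃ γ : ℝ, 0 < γ ∧
      ∀ (ψ : ℝ → ℝ) (G : ℝ), 0 ≤ G →
        (∀ t : ℝ, 0 ≤ t → t * G ≤ ρ → |ψ t - ψ 0 + t * G ^ 2| ≤ L / 2 * t ^ 2 * G ^ 2) →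
        ∃ t : ℝ, 0 ≤ t ∧ ψ t - ψ 0 ≤ -γ * G * min 1 G := by
  refine ⟨min (1 / (2 * (L + 1))) (ρ / 2), by positivity, ?_⟩
  intro ψ G hG h
  rcases eq_or_lt_of_le hG with hG0 | hGpos
  · refine ⟨0, le_refl 0, ?_⟩
    simp [← hG0]
  · set γ := min (1 / (2 * (L + 1))) (ρ / 2) with hγdef
    set t := min (1 / (L + 1)) (ρ / G) with htdef
    have hL1 : (0:ℝ) < L + 1 := by linarith
    have ht0 : 0 ≤ t := le_min (by positivity) (by positivity)
    have htρ : t * G ≤ ρ := by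
      have : t ≤ ρ / G := min_le_right _ _
      calc t * G ≤ (ρ / G) * G := by nlinarith
        _ = ρ := by field_simp
    have hb := h t ht0 htρ
    have hupper : ψ t - ψ 0 ≤ -(t * G ^ 2) + L / 2 * t ^ 2 * G ^ 2 := by
      have := abs_le.mp hb
      linarith [this.2]
    have ht1 : t ≤ 1 / (L + 1) := min_le_left _ _
    have hhalf : L / 2 * t ^ 2 * G ^ 2 ≤ t * G ^ 2 / 2 := by
      have h1 : L * t ≤ 1 := by
        have ha : L * t ≤ L * (1 / (L + 1)) := by nlinarith
        have hb2 : L * (1 / (L + 1)) ≤ 1 := by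
          rw [mul_one_div, div_le_one hL1]; linarith
        linarith
      nlinarith [mul_le_mul_of_nonneg_right h1 (mul_nonneg ht0 (sq_nonneg G))]
    have hmin : min 1 G ≤ G := by
      rcases le_total (1:ℝ) G with hc | hc
      · simpa [min_eq_left hc]
      · simp [min_eq_right hc]
    have hminle1 : min 1 G ≤ 1 := min_le_left _ _
    have hmin0 : 0 ≤ min 1 G := le_min zero_le_one hG
    have hkey : γ * G * min 1 G ≤ t * G ^ 2 / 2 := by
      rcases min_cases (1 / (L + 1)) (ρ / G) with ⟨heq, _⟩ | ⟨heq, hle⟩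
      · -- t = 1/(L+1)
        have hγle : γ ≤ 1 / (2 * (L + 1)) := min_le_left _ _
        have : γ * G * min 1 G ≤ 1 / (2 * (L + 1)) * G * G :=
          mul_le_mul (mul_le_mul hγle (le_refl G) hG (by positivity)) hmin hmin0
            (by positivity)
        calc γ * G * min 1 G ≤ 1 / (2 * (L + 1)) * G * G := this
          _ = (1 / (L + 1)) * G ^ 2 / 2 := by field_simp
          _ = t * G ^ 2 / 2 := by rw [htdef, heq]
      · -- t = ρ/G
        have hγle : γ ≤ ρ / 2 := min_le_right _ _
        have hγ0 : 0 ≤ γ := le_of_lt (lt_min (by positivity) (by positivity))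
        have : γ * G * min 1 G ≤ (ρ / 2) * G * 1 :=
          mul_le_mul (mul_le_mul hγle (le_refl G) hG (by positivity)) hminle1 hmin0
            (by positivity)
        calc γ * G * min 1 G ≤ (ρ / 2) * G * 1 := this
          _ = (ρ / G) * G ^ 2 / 2 := by field_simp
          _ = t * G ^ 2 / 2 := by rw [htdef, heq]
    refine ⟨t, ht0, ?_⟩
    have : -γ * G * min 1 G = -(γ * G * min 1 G) := by ring
    rw [this]
    linarith
end

section
/- For every L ≥ 0 and ρ > 0 there exists a constant γ > 0, depending only on L and ρ, with the following property: for every function ψ : ℝ → ℝ and every ξ ∈ ℝ such that |ψ(t) − ψ(0) − ξ·t²| ≤ (L/6)·t³ for all t ∈ [0, ρ], there exists t ∈ [0, ρ] with ψ(t) − ψ(0) ≤ γ·ξ·min{1, ξ²}. -/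
/-- abstract saddle-escape lemma (Proposition 3.3):
for every `L ≥ 0` and `ρ > 0` there is `γ > 0`, depending only on `L` and `ρ`, such that
for any `ψ : ℝ → ℝ` and `ξ ∈ ℝ` with
`|ψ(t) − ψ(0) − ξ·t²| ≤ (L/6)·t³` for all `t ∈ [0, ρ]`,
some `t ∈ [0, ρ]` achieves `ψ(t) − ψ(0) ≤ γ·ξ·min{1, ξ²}`. -/
theorem stmt3 (L ρ : ℝ) (hL : 0 ≤ L) (hρ : 0 < ρ) :
    ∃ γ : ℝ, 0 < γ ∧
      ∀ (ψ : ℝ → ℝ) (ξ : ℝ),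
        (∀ t ∈ Set.Icc (0 : ℝ) ρ, |ψ t - ψ 0 - ξ * t ^ 2| ≤ L / 6 * t ^ 3) →
        ∃ t ∈ Set.Icc (0 : ℝ) ρ, ψ t - ψ 0 ≤ γ * ξ * min 1 (ξ ^ 2) := by
  set M : ℝ := L + 1 with hMdef
  have hMpos : 0 < M := by simp [hMdef]; linarith
  have hmin : 0 < min ρ (3 / M) := lt_min hρ (by positivity)
  refine ⟨(min ρ (3 / M)) ^ 2 / 2, by positivity, ?_⟩
  intro ψ ξ hψ
  rcases le_or_gt 0 ξ with hξ | hξ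
  · refine ⟨0, ⟨le_refl 0, hρ.le⟩, ?_⟩
    have : 0 ≤ (min ρ (3 / M)) ^ 2 / 2 * ξ * min 1 (ξ ^ 2) := by
      apply mul_nonneg (mul_nonneg (by positivity) hξ)
      exact le_min (by norm_num) (by positivity)
    linarith
  · set t : ℝ := min ρ (3 * |ξ| / M) with htdef
    have habs : 0 < |ξ| := abs_pos.mpr hξ.ne
    have ht0 : 0 < t := lt_min hρ (by positivity)
    have htρ : t ≤ ρ := min_le_left _ _
    have htM : t ≤ 3 * |ξ| / M := min_le_right _ _
    refine ⟨t, ⟨ht0.le, htρ⟩, ?_⟩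
    have h1 : ψ t - ψ 0 ≤ ξ * t ^ 2 + L / 6 * t ^ 3 := by
      have := abs_le.mp (hψ t ⟨ht0.le, htρ⟩)
      linarith [this.2]
    have hLt : L / 6 * t ≤ |ξ| / 2 := by
      have hMt : M * t ≤ 3 * |ξ| := by
        have := mul_le_mul_of_nonneg_left htM hMpos.le
        rwa [mul_div_cancel₀ _ hMpos.ne'] at this
      nlinarith [ht0.le, hL]
    have hξabs : ξ = -|ξ| := (abs_of_neg hξ).symm ▸ (neg_neg ξ).symm
    have h2 : ψ t - ψ 0 ≤ -(|ξ| / 2) * t ^ 2 := by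
      have ht2 : 0 ≤ t ^ 2 := sq_nonneg t
      nlinarith [h1, hLt]
    -- key: (min ρ (3/M))^2 * min 1 ξ² ≤ t²
    have hkey : (min ρ (3 / M)) ^ 2 * min 1 (ξ ^ 2) ≤ t ^ 2 := by
      rcases le_total 1 (ξ ^ 2) with h | h
      · rw [min_eq_left h, mul_one]
        have habs1 : 1 ≤ |ξ| := by nlinarith [sq_abs ξ, abs_nonneg ξ]
        have hle : min ρ (3 / M) ≤ t := by
          refine le_min (min_le_left _ _) ((min_le_right _ _).trans ?_)
          rw [div_le_div_iff₀ hMpos hMpos]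
          nlinarith
        exact pow_le_pow_left₀ hmin.le hle 2
      · rw [min_eq_right h]
        have habs1 : |ξ| ≤ 1 := by nlinarith [sq_abs ξ, abs_nonneg ξ]
        have hle : min ρ (3 / M) * |ξ| ≤ t := by
          refine le_min ?_ ?_
          · calc min ρ (3 / M) * |ξ| ≤ ρ * 1 :=
                  mul_le_mul (min_le_left _ _) habs1 habs.le hρ.le
              _ = ρ := mul_one ρ
          · calc min ρ (3 / M) * |ξ| ≤ (3 / M) * |ξ| :=
                  mul_le_mul_of_nonneg_right (min_le_right _ _) habs.le
              _ = 3 * |ξ| / M := by ring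
        have := pow_le_pow_left₀ (by positivity) hle 2
        calc (min ρ (3 / M)) ^ 2 * ξ ^ 2
            = (min ρ (3 / M) * |ξ|) ^ 2 := by rw [mul_pow, sq_abs]
          _ ≤ t ^ 2 := this
    have hprod2 : (min ρ (3 / M)) ^ 2 / 2 * ξ * min 1 (ξ ^ 2)
        = -((min ρ (3 / M)) ^ 2 / 2 * (|ξ| * min 1 (ξ ^ 2))) := by
      rw [abs_of_neg hξ]; ring
    have hfinal : -(|ξ| / 2) * t ^ 2 ≤ (min ρ (3 / M)) ^ 2 / 2 * ξ * min 1 (ξ ^ 2) := by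
      rw [hprod2]
      nlinarith [mul_nonneg habs.le (sub_nonneg.mpr hkey)]
    linarith
end

section
/- Let R, R* ∈ ℝ^{(n−k)×r} and y, y* ∈ ℝᵖ satisfy the same linear constraints: 𝒜(R̂R̂ᵀ) + B(y∘y) = b and 𝒜(R̂*R̂*ᵀ) + B(y*∘y*) = b. Let C ∈ Sⁿ, c ∈ ℝᵖ and λ ∈ ℝᵐ be arbitrary. Then ⟨C, R̂R̂ᵀ − R̂*R̂*ᵀ⟩ + ⟨c, y∘y − y*∘y*⟩ = ⟨2J(C − 𝒜*(λ))R̂, R − R*⟩ + ⟨2(c − Bᵀλ)∘y, y − y*⟩ − ⟨C₂₂ − 𝒜̃*(λ), (R − R*)(R − R*)ᵀ⟩ − ⟨c − Bᵀλ, (y − y*)∘(y − y*)⟩. -/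
open Matrix

noncomputable section

def Ikr (k r : ℕ) : Matrix (Fin k) (Fin r) ℝ :=
  Matrix.of fun i j => if (i : ℕ) = (j : ℕ) then (1 : ℝ) else 0

def Jmat (k nk : ℕ) : Matrix (Fin nk) (Fin k ⊕ Fin nk) ℝ :=
  Matrix.of fun i j => if j = Sum.inr i then (1 : ℝ) else 0

def Rhat {nk r : ℕ} (k : ℕ) (R : Matrix (Fin nk) (Fin r) ℝ) :
    Matrix (Fin k ⊕ Fin nk) (Fin r) ℝ :=
  Matrix.of fun i j => Sum.elim (fun a => Ikr k r a j) (fun b => R b j) i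

-- auxiliary lemmas
lemma Rhat_sub {nk r : ℕ} (k : ℕ) (R Rstar : Matrix (Fin nk) (Fin r) ℝ) :
    Rhat k R - Rhat k Rstar = (Jmat k nk)ᵀ * (R - Rstar) := by
  ext i j
  cases i with
  | inl a =>
      simp [Rhat, Jmat, Ikr, Matrix.mul_apply, Matrix.transpose_apply]
  | inr b =>
      simp [Rhat, Jmat, Ikr, Matrix.mul_apply, Matrix.transpose_apply]

lemma symm_expand {n r : Type*} [Fintype n] [Fintype r]
    (M : Matrix n n ℝ) (hM : Mᵀ = M) (H Hs : Matrix n r ℝ) :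
    (M * (H * Hᵀ - Hs * Hsᵀ)ᵀ).trace
      = 2 * (M * H * (H - Hs)ᵀ).trace
        - (M * ((H - Hs) * (H - Hs)ᵀ)ᵀ).trace := by
  have h1 : H * Hᵀ - Hs * Hsᵀ
      = H * (H - Hs)ᵀ + (H - Hs) * Hᵀ - (H - Hs) * (H - Hs)ᵀ := by
    simp only [transpose_sub, Matrix.mul_sub, Matrix.sub_mul]
    abel
  have h2 : (H * Hᵀ - Hs * Hsᵀ)ᵀ = H * Hᵀ - Hs * Hsᵀ := by
    simp [transpose_sub, Matrix.transpose_mul]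
  have h3 : ((H - Hs) * (H - Hs)ᵀ)ᵀ = (H - Hs) * (H - Hs)ᵀ := by
    simp [Matrix.transpose_mul]
  have h4 : (M * (H - Hs) * Hᵀ).trace = (M * H * (H - Hs)ᵀ).trace := by
    rw [← Matrix.trace_transpose (M * (H - Hs) * Hᵀ)]
    simp only [Matrix.transpose_mul, Matrix.transpose_transpose, hM]
    rw [Matrix.mul_assoc, Matrix.trace_mul_comm M, ← Matrix.mul_assoc]
  rw [h2, h1, h3]
  rw [Matrix.mul_sub, Matrix.mul_add, Matrix.trace_sub, Matrix.trace_add,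
    ← Matrix.mul_assoc, ← Matrix.mul_assoc, ← Matrix.mul_assoc, h4]
  ring

lemma vec_expand {p : ℕ} (c y ys : Fin p → ℝ) :
    c ⬝ᵥ (y * y - ys * ys)
      = 2 * ((c * y) ⬝ᵥ (y - ys)) - c ⬝ᵥ ((y - ys) * (y - ys)) := by
  simp only [dotProduct, Pi.mul_apply, Pi.sub_apply, Finset.mul_sum,
    ← Finset.sum_sub_distrib]
  exact Finset.sum_congr rfl fun i _ => by ring

/-- the key identity (equations (Mar_7_2)–(Mar_7_6)) in the proof of the
Polyak–Łojasiewicz lemma: for two feasible points of (SDPR), the first-order gap decomposes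
into a Riemannian-gradient term minus second-order correction terms. -/
theorem stmt6 {k nk r p m : ℕ}
    (A : Matrix (Fin k ⊕ Fin nk) (Fin k ⊕ Fin nk) ℝ →ₗ[ℝ] (Fin m → ℝ))
    (Astar : (Fin m → ℝ) →ₗ[ℝ] Matrix (Fin k ⊕ Fin nk) (Fin k ⊕ Fin nk) ℝ)
    (hadj : ∀ X lam, A X ⬝ᵥ lam = (X * (Astar lam)ᵀ).trace)
    (hAstarSymm : ∀ lam, (Astar lam)ᵀ = Astar lam)
    (B : Matrix (Fin m) (Fin p) ℝ) (b : Fin m → ℝ)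
    (R Rstar : Matrix (Fin nk) (Fin r) ℝ) (y ystar : Fin p → ℝ)
    (hfeas : A (Rhat k R * (Rhat k R)ᵀ) + B *ᵥ (y * y) = b)
    (hfeasstar : A (Rhat k Rstar * (Rhat k Rstar)ᵀ) + B *ᵥ (ystar * ystar) = b)
    (C : Matrix (Fin k ⊕ Fin nk) (Fin k ⊕ Fin nk) ℝ) (hC : Cᵀ = C)
    (c : Fin p → ℝ) (lam : Fin m → ℝ) :
    (C * (Rhat k R * (Rhat k R)ᵀ - Rhat k Rstar * (Rhat k Rstar)ᵀ)ᵀ).trace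
      + c ⬝ᵥ (y * y - ystar * ystar)
    = (((2 : ℝ) • (Jmat k nk * (C - Astar lam) * Rhat k R)) * (R - Rstar)ᵀ).trace
      + ((2 : ℝ) • ((c - Bᵀ *ᵥ lam) * y)) ⬝ᵥ (y - ystar)
      - ((Jmat k nk * (C - Astar lam) * (Jmat k nk)ᵀ)
          * ((R - Rstar) * (R - Rstar)ᵀ)ᵀ).trace
      - (c - Bᵀ *ᵥ lam) ⬝ᵥ ((y - ystar) * (y - ystar)) := by
  set H := Rhat k R with hH
  set Hs := Rhat k Rstar with hHs
  set J := Jmat k nk with hJ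
  set M0 := Astar lam with hM0
  set G := R - Rstar with hG
  have eD : H - Hs = Jᵀ * G := Rhat_sub k R Rstar
  -- feasibility difference
  have h0 : A (H * Hᵀ - Hs * Hsᵀ) + B *ᵥ (y * y - ystar * ystar) = 0 := by
    have h0' : (A (H * Hᵀ) + B *ᵥ (y * y)) - (A (Hs * Hsᵀ) + B *ᵥ (ystar * ystar)) = 0 := by
      rw [hfeas, hfeasstar, sub_self]
    rw [map_sub, Matrix.mulVec_sub]
    rw [← h0']
    abel
  have hzero : (M0 * (H * Hᵀ - Hs * Hsᵀ)ᵀ).trace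
      + (Bᵀ *ᵥ lam) ⬝ᵥ (y * y - ystar * ystar) = 0 := by
    have := congrArg (fun v => v ⬝ᵥ lam) h0
    simp only [add_dotProduct, zero_dotProduct] at this
    rw [hadj] at this
    rw [← Matrix.trace_transpose (M0 * (H * Hᵀ - Hs * Hsᵀ)ᵀ), Matrix.transpose_mul,
      Matrix.transpose_transpose]
    rw [show (Bᵀ *ᵥ lam) ⬝ᵥ (y * y - ystar * ystar)
        = (B *ᵥ (y * y - ystar * ystar)) ⬝ᵥ lam from ?_]
    · exact this
    · rw [Matrix.mulVec_transpose, ← Matrix.dotProduct_mulVec, dotProduct_comm]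
  -- expand both quadratic differences
  rw [symm_expand C hC H Hs, vec_expand c y ystar]
  rw [symm_expand M0 (hAstarSymm lam) H Hs, vec_expand (Bᵀ *ᵥ lam) y ystar] at hzero
  -- rewrite RHS trace terms
  have e1 : ((C - M0) * H * (H - Hs)ᵀ).trace = (J * (C - M0) * H * Gᵀ).trace := by
    rw [eD, Matrix.transpose_mul, Matrix.transpose_transpose, ← Matrix.mul_assoc,
      Matrix.trace_mul_comm, ← Matrix.mul_assoc, ← Matrix.mul_assoc]
  have e2 : ((C - M0) * ((H - Hs) * (H - Hs)ᵀ)ᵀ).trace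
      = (J * (C - M0) * Jᵀ * (G * Gᵀ)ᵀ).trace := by
    rw [eD]
    simp only [Matrix.transpose_mul, Matrix.transpose_transpose, ← Matrix.mul_assoc]
    rw [Matrix.trace_mul_comm]
    simp only [← Matrix.mul_assoc]
  rw [Matrix.smul_mul, Matrix.trace_smul, smul_eq_mul, smul_dotProduct, smul_eq_mul]
  rw [← e1, ← e2]
  simp only [Matrix.sub_mul, Matrix.trace_sub, sub_mul, sub_dotProduct, Matrix.transpose_sub, Matrix.mul_sub, sub_dotProduct, dotProduct_sub] at hzero ⊢
  linear_combination hzero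


end
end

section
/- Let y, y* ∈ ℝᵖ have the same support (i.e., {i : y_i ≠ 0} = {i : y*_i ≠ 0}) and satisfy y_i·y*_i ≥ 0 for every i. Assume y* ≠ 0 and let σ := min{ |y*_i| : y*_i ≠ 0 }. Then ‖y∘y − y*∘y*‖ ≥ σ·‖y − y*‖, where ‖·‖ is the Euclidean norm and '∘' is the entrywise product. -/
open Matrix

/-- if `y` and `y*` have the same support, agree in sign entrywise, and
`σ` is the smallest absolute value of a nonzero entry of `y* ≠ 0`, then
`‖y∘y − y*∘y*‖ ≥ σ·‖y − y*‖` (equation (Mar_7_11) of the paper). -/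
theorem stmt7 {p : ℕ} (y ystar : Fin p → ℝ)
    (hsupp : ∀ i, y i ≠ 0 ↔ ystar i ≠ 0)
    (hsign : ∀ i, 0 ≤ y i * ystar i)
    (hne : ystar ≠ 0)
    (σ : ℝ) (hσ : IsLeast {t : ℝ | ∃ i, ystar i ≠ 0 ∧ t = |ystar i|} σ) :
    σ * Real.sqrt ((y - ystar) ⬝ᵥ (y - ystar)) ≤
      Real.sqrt ((y * y - ystar * ystar) ⬝ᵥ (y * y - ystar * ystar)) := by
  obtain ⟨⟨i0, hi0, hσeq⟩, hlb⟩ := hσ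
  have hσ0 : 0 ≤ σ := hσeq ▸ abs_nonneg _
  have key : ∀ i, σ^2 * ((y i - ystar i) * (y i - ystar i)) ≤
      (y i * y i - ystar i * ystar i) * (y i * y i - ystar i * ystar i) := by
    intro i
    by_cases h : ystar i = 0
    · have hy : y i = 0 := by
        by_contra hy; exact (hsupp i).1 hy h
      simp [h, hy]
    · have hy : y i ≠ 0 := (hsupp i).2 h
      have hσle : σ ≤ |ystar i| := hlb ⟨i, h, rfl⟩
      have h1 : σ^2 ≤ (y i + ystar i)^2 := by
        nlinarith [hsign i, sq_abs (ystar i), mul_self_le_mul_self hσ0 hσle]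
      nlinarith [sq_nonneg (y i - ystar i)]
  have hsum : σ^2 * ((y - ystar) ⬝ᵥ (y - ystar)) ≤
      (y * y - ystar * ystar) ⬝ᵥ (y * y - ystar * ystar) := by
    simp only [dotProduct, Pi.sub_apply, Pi.mul_apply, Finset.mul_sum]
    exact Finset.sum_le_sum fun i _ => key i
  calc σ * Real.sqrt ((y - ystar) ⬝ᵥ (y - ystar))
      = Real.sqrt (σ^2 * ((y - ystar) ⬝ᵥ (y - ystar))) := by
        rw [Real.sqrt_mul (sq_nonneg σ), Real.sqrt_sq hσ0]
    _ ≤ _ := Real.sqrt_le_sqrt hsum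
end

section
/- Let R, R* ∈ ℝ^{(n−k)×r} and y, y* ∈ ℝᵖ satisfy 𝒜(R̂R̂ᵀ) + B(y∘y) = b and 𝒜(R̂*R̂*ᵀ) + B(y*∘y*) = b. Set X := R̂R̂ᵀ, x := y∘y, X* := R̂*R̂*ᵀ, x* := y*∘y*. Let C ∈ Sⁿ, c ∈ ℝᵖ, λ ∈ ℝᵐ, and let α > 0, σ_h ≥ 0, c_R ≥ 0, c_y ≥ 0 be constants. Assume: (a) ⟨C, X − X*⟩ + ⟨c, x − x*⟩ ≥ (α/2)·(‖X − X*‖² + ‖x − x*‖²); (b) ⟨C₂₂ − 𝒜̃*(λ), (R − R*)(R − R*)ᵀ⟩ ≥ −σ_h·‖R − R*‖² and ⟨c − Bᵀλ, (y − y*)∘(y − y*)⟩ ≥ −σ_h·‖y − y*‖²; (c) ‖X − X*‖² ≥ c_R·‖R − R*‖² and ‖x − x*‖² ≥ c_y·‖y − y*‖²; (d) (α/2)·c_R ≥ 2σ_h and (α/2)·c_y ≥ 2σ_h. Then √( ‖2J(C − 𝒜*(λ))R̂‖² + ‖2(c − Bᵀλ)∘y‖² ) ≥ σ_h·√( ‖R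 − R*‖² + ‖y − y*‖² ). -/
open Matrix
noncomputable section

/-- Squared Frobenius norm `‖M‖² = Tr(MMᵀ)`. -/
def frobSq {I J : Type*} [Fintype I] [Fintype J] (M : Matrix I J ℝ) : ℝ :=
  (M * Mᵀ).trace

lemma trace_mt_sum {I J : Type*} [Fintype I] [Fintype J]
    (M N : Matrix I J ℝ) : (M * Nᵀ).trace = ∑ q : I × J, M q.1 q.2 * N q.1 q.2 := by
  rw [Matrix.trace]
  simp only [Matrix.diag, Matrix.mul_apply, Matrix.transpose_apply]
  rw [← Finset.sum_product']
  rfl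

lemma frobSq_eq {I J : Type*} [Fintype I] [Fintype J] (M : Matrix I J ℝ) :
    frobSq M = ∑ q : I × J, (M q.1 q.2) ^ 2 := by
  rw [frobSq, trace_mt_sum]; simp [sq]

lemma frobSq_nonneg {I J : Type*} [Fintype I] [Fintype J] (M : Matrix I J ℝ) :
    0 ≤ frobSq M := by
  rw [frobSq_eq]; positivity

lemma cs_mat {I J : Type*} [Fintype I] [Fintype J] (M N : Matrix I J ℝ) :
    (M * Nᵀ).trace ≤ Real.sqrt (frobSq M) * Real.sqrt (frobSq N) := by
  rw [trace_mt_sum, frobSq_eq, frobSq_eq]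
  exact Real.sum_mul_le_sqrt_mul_sqrt _ _ _

lemma dot_self_nonneg' {p : ℕ} (v : Fin p → ℝ) : 0 ≤ v ⬝ᵥ v := by
  simp only [dotProduct, ← sq]; positivity

lemma cs_vec {p : ℕ} (u v : Fin p → ℝ) :
    u ⬝ᵥ v ≤ Real.sqrt (u ⬝ᵥ u) * Real.sqrt (v ⬝ᵥ v) := by
  simp only [dotProduct, ← sq]
  exact Real.sum_mul_le_sqrt_mul_sqrt _ _ _

lemma trace_mul_t_comm {I J : Type*} [Fintype I] [Fintype J] (M N : Matrix I J ℝ) :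
    (M * Nᵀ).trace = (N * Mᵀ).trace := by
  rw [← Matrix.trace_transpose (M * Nᵀ), Matrix.transpose_mul, Matrix.transpose_transpose,
    Matrix.trace_mul_comm]

section TraceLems
variable {n nk r : Type*} [Fintype n] [Fintype nk] [Fintype r] [DecidableEq n]

/-- trace (S · (D Rhᵀ)ᵀ) = trace ((Jm S Rh) Δᵀ) where D = Jmᵀ Δ. -/
lemma trA (S : Matrix n n ℝ) (Jm : Matrix nk n ℝ) (Rh : Matrix n r ℝ)
    (Δ : Matrix nk r ℝ) :
    (S * ((Jmᵀ * Δ) * Rhᵀ)ᵀ).trace = ((Jm * S * Rh) * Δᵀ).trace := by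
  have e1 : S * ((Jmᵀ * Δ) * Rhᵀ)ᵀ = (S * (Rh * Δᵀ)) * Jm := by
    simp only [Matrix.transpose_mul, Matrix.transpose_transpose, Matrix.mul_assoc]
  rw [e1, Matrix.trace_mul_comm]
  simp only [Matrix.mul_assoc]

/-- trace (S · (Rh Dᵀ)ᵀ) = trace ((Jm S Rh) Δᵀ) for symmetric S. -/
lemma trB (S : Matrix n n ℝ) (Jm : Matrix nk n ℝ) (Rh : Matrix n r ℝ)
    (Δ : Matrix nk r ℝ) (hS : Sᵀ = S) :
    (S * (Rh * (Jmᵀ * Δ)ᵀ)ᵀ).trace = ((Jm * S * Rh) * Δᵀ).trace := by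
  have e1 : S * (Rh * (Jmᵀ * Δ)ᵀ)ᵀ = (S * Jmᵀ) * (Δ * Rhᵀ) := by
    simp only [Matrix.transpose_mul, Matrix.transpose_transpose, Matrix.mul_assoc]
  rw [e1, Matrix.trace_mul_comm]
  have e2 : (Δ * Rhᵀ) * (S * Jmᵀ) = ((Jm * Sᵀ * Rh) * Δᵀ)ᵀ := by
    simp only [Matrix.transpose_mul, Matrix.transpose_transpose, Matrix.mul_assoc]
  rw [e2, Matrix.trace_transpose, hS]

/-- trace (S · (D Dᵀ)ᵀ) = trace ((Jm S Jmᵀ) (Δ Δᵀ)ᵀ). -/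
lemma trC (S : Matrix n n ℝ) (Jm : Matrix nk n ℝ) (Δ : Matrix nk r ℝ) :
    (S * ((Jmᵀ * Δ) * (Jmᵀ * Δ)ᵀ)ᵀ).trace = ((Jm * S * Jmᵀ) * (Δ * Δᵀ)ᵀ).trace := by
  have e1 : S * ((Jmᵀ * Δ) * (Jmᵀ * Δ)ᵀ)ᵀ = (S * (Jmᵀ * (Δ * Δᵀ))) * Jm := by
    simp only [Matrix.transpose_mul, Matrix.transpose_transpose, Matrix.mul_assoc]
  rw [e1, Matrix.trace_mul_comm]
  simp only [Matrix.transpose_mul, Matrix.transpose_transpose, Matrix.mul_assoc]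

end TraceLems

set_option maxHeartbeats 1000000 in
/-- the Riemannian-gradient lower bound (equations (Mar_8_2)–(Mar_8_3)) at the
heart of the proof of the Polyak–Łojasiewicz Lemma 3.7. -/
theorem stmt8 {k nk r p m : ℕ}
    (A : Matrix (Fin k ⊕ Fin nk) (Fin k ⊕ Fin nk) ℝ →ₗ[ℝ] (Fin m → ℝ))
    (Astar : (Fin m → ℝ) →ₗ[ℝ] Matrix (Fin k ⊕ Fin nk) (Fin k ⊕ Fin nk) ℝ)
    (hadj : ∀ X lam, A X ⬝ᵥ lam = (X * (Astar lam)ᵀ).trace)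
    (hAstarSymm : ∀ lam, (Astar lam)ᵀ = Astar lam)
    (B : Matrix (Fin m) (Fin p) ℝ) (b : Fin m → ℝ)
    (R Rstar : Matrix (Fin nk) (Fin r) ℝ) (y ystar : Fin p → ℝ)
    (hfeas : A (Rhat k R * (Rhat k R)ᵀ) + B *ᵥ (y * y) = b)
    (hfeasstar : A (Rhat k Rstar * (Rhat k Rstar)ᵀ) + B *ᵥ (ystar * ystar) = b)
    (C : Matrix (Fin k ⊕ Fin nk) (Fin k ⊕ Fin nk) ℝ) (hC : Cᵀ = C)
    (c : Fin p → ℝ) (lam : Fin m → ℝ)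
    (α σh cR cy : ℝ) (hα : 0 < α) (hσh : 0 ≤ σh) (hcR : 0 ≤ cR) (hcy : 0 ≤ cy)
    -- (a) convexity gradient inequality + quadratic growth
    (ha : α / 2 * (frobSq (Rhat k R * (Rhat k R)ᵀ - Rhat k Rstar * (Rhat k Rstar)ᵀ)
            + (y * y - ystar * ystar) ⬝ᵥ (y * y - ystar * ystar))
        ≤ (C * (Rhat k R * (Rhat k R)ᵀ - Rhat k Rstar * (Rhat k Rstar)ᵀ)ᵀ).trace
            + c ⬝ᵥ (y * y - ystar * ystar))
    -- (b) near-dual-feasibility curvature bounds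
    (hb1 : -(σh * frobSq (R - Rstar)) ≤
        ((Jmat k nk * (C - Astar lam) * (Jmat k nk)ᵀ)
          * ((R - Rstar) * (R - Rstar)ᵀ)ᵀ).trace)
    (hb2 : -(σh * ((y - ystar) ⬝ᵥ (y - ystar))) ≤
        (c - Bᵀ *ᵥ lam) ⬝ᵥ ((y - ystar) * (y - ystar)))
    -- (c) distance comparison bounds
    (hc1 : cR * frobSq (R - Rstar) ≤
        frobSq (Rhat k R * (Rhat k R)ᵀ - Rhat k Rstar * (Rhat k Rstar)ᵀ))
    (hc2 : cy * ((y - ystar) ⬝ᵥ (y - ystar)) ≤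
        (y * y - ystar * ystar) ⬝ᵥ (y * y - ystar * ystar))
    -- (d) parameter relations
    (hd1 : 2 * σh ≤ α / 2 * cR) (hd2 : 2 * σh ≤ α / 2 * cy) :
    σh * Real.sqrt (frobSq (R - Rstar) + (y - ystar) ⬝ᵥ (y - ystar)) ≤
      Real.sqrt (frobSq ((2 : ℝ) • (Jmat k nk * (C - Astar lam) * Rhat k R))
        + ((2 : ℝ) • ((c - Bᵀ *ᵥ lam) * y)) ⬝ᵥ ((2 : ℝ) • ((c - Bᵀ *ᵥ lam) * y))) := by
  set Jm := Jmat k nk with hJm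
  set S := C - Astar lam with hSdef
  set Rh := Rhat k R with hRh
  set Rs := Rhat k Rstar with hRs
  set Δ := R - Rstar with hΔ
  set δ := y - ystar with hδ
  set ΔX := Rh * Rhᵀ - Rs * Rsᵀ with hΔX
  set Δx := y * y - ystar * ystar with hΔx
  set s := c - Bᵀ *ᵥ lam with hs
  have hS : Sᵀ = S := by
    rw [hSdef, Matrix.transpose_sub, hC, hAstarSymm]
  have hsub : Rh - Rs = Jmᵀ * Δ := by
    have h := Rhat_sub k R Rstar
    rw [← hRh, ← hRs, ← hΔ, ← hJm] at h
    exact h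
  have hRsD : Rs = Rh - Jmᵀ * Δ := by rw [← hsub]; abel
  have hdec : ΔX = Rh * (Jmᵀ * Δ)ᵀ + (Jmᵀ * Δ) * Rhᵀ - (Jmᵀ * Δ) * (Jmᵀ * Δ)ᵀ := by
    rw [hΔX, hRsD]
    simp only [Matrix.transpose_sub, Matrix.sub_mul, Matrix.mul_sub]
    abel
  have key1 : (S * ΔXᵀ).trace =
      2 * ((Jm * S * Rh) * Δᵀ).trace - ((Jm * S * Jmᵀ) * (Δ * Δᵀ)ᵀ).trace := by
    rw [hdec]
    simp only [Matrix.transpose_sub, Matrix.transpose_add, Matrix.mul_sub, Matrix.mul_add,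
      Matrix.trace_sub, Matrix.trace_add]
    rw [trB S Jm Rh Δ hS, trA S Jm Rh Δ, trC S Jm Δ]
    ring
  -- adjoint / feasibility
  have hAeq : A ΔX = -(B *ᵥ Δx) := by
    have h1 : A (Rh * Rhᵀ) = b - B *ᵥ (y * y) := by rw [← hfeas]; abel
    have h2 : A (Rs * Rsᵀ) = b - B *ᵥ (ystar * ystar) := by rw [← hfeasstar]; abel
    rw [hΔX, map_sub, h1, h2, hΔx, Matrix.mulVec_sub]
    abel
  have hAd : (ΔX * (Astar lam)ᵀ).trace = -(Δx ⬝ᵥ (Bᵀ *ᵥ lam)) := by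
    rw [← hadj, hAeq, neg_dotProduct, neg_inj]
    calc (B *ᵥ Δx) ⬝ᵥ lam = lam ⬝ᵥ (B *ᵥ Δx) := dotProduct_comm _ _
      _ = (lam ᵥ* B) ⬝ᵥ Δx := Matrix.dotProduct_mulVec _ _ _
      _ = (Bᵀ *ᵥ lam) ⬝ᵥ Δx := by rw [Matrix.mulVec_transpose]
      _ = Δx ⬝ᵥ (Bᵀ *ᵥ lam) := dotProduct_comm _ _
  have key2 : (S * ΔXᵀ).trace = (C * ΔXᵀ).trace + (Bᵀ *ᵥ lam) ⬝ᵥ Δx := by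
    rw [hSdef, Matrix.sub_mul, Matrix.trace_sub, trace_mul_t_comm (Astar lam) ΔX, hAd,
      dotProduct_comm Δx]
    ring
  -- vector identity
  have hvec : 2 * ((s * y) ⬝ᵥ δ) = s ⬝ᵥ Δx + s ⬝ᵥ (δ * δ) := by
    simp only [dotProduct, Pi.mul_apply, Finset.mul_sum, ← Finset.sum_add_distrib]
    refine Finset.sum_congr rfl fun i _ => ?_
    have h1 : δ i = y i - ystar i := rfl
    have h2 : Δx i = y i * y i - ystar i * ystar i := rfl
    rw [h1, h2]; ring
  have hsplit : s ⬝ᵥ Δx = c ⬝ᵥ Δx - (Bᵀ *ᵥ lam) ⬝ᵥ Δx := by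
    rw [hs, sub_dotProduct]
  set P := 2 * ((Jm * S * Rh) * Δᵀ).trace + 2 * ((s * y) ⬝ᵥ δ) with hP
  have keyP : P = (C * ΔXᵀ).trace + c ⬝ᵥ Δx
      + ((Jm * S * Jmᵀ) * (Δ * Δᵀ)ᵀ).trace + s ⬝ᵥ (δ * δ) := by
    have h := key1
    rw [key2] at h
    rw [hP, hvec, hsplit]
    linarith
  have hfrΔ : (0:ℝ) ≤ frobSq Δ := frobSq_nonneg Δ
  have hδδ : (0:ℝ) ≤ δ ⬝ᵥ δ := dot_self_nonneg' δ
  have hα2 : (0:ℝ) ≤ α / 2 := by linarith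
  have f1 : 2 * σh * frobSq Δ ≤ (α / 2 * cR) * frobSq Δ :=
    mul_le_mul_of_nonneg_right hd1 hfrΔ
  have f2 : 2 * σh * (δ ⬝ᵥ δ) ≤ (α / 2 * cy) * (δ ⬝ᵥ δ) :=
    mul_le_mul_of_nonneg_right hd2 hδδ
  have f3 : α / 2 * (cR * frobSq Δ) ≤ α / 2 * frobSq ΔX :=
    mul_le_mul_of_nonneg_left hc1 hα2
  have f4 : α / 2 * (cy * (δ ⬝ᵥ δ)) ≤ α / 2 * (Δx ⬝ᵥ Δx) :=
    mul_le_mul_of_nonneg_left hc2 hα2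
  have hPlow : σh * (frobSq Δ + δ ⬝ᵥ δ) ≤ P := by
    rw [keyP]
    linarith [ha, hb1, hb2]
  -- Cauchy–Schwarz
  set G := Jm * S * Rh with hG
  set T := frobSq ((2:ℝ) • G) + ((2:ℝ) • (s * y)) ⬝ᵥ ((2:ℝ) • (s * y)) with hT
  set S2 := frobSq Δ + δ ⬝ᵥ δ with hS2
  have hTnn : (0:ℝ) ≤ T := by
    have h1 := frobSq_nonneg ((2:ℝ) • G)
    have h2 := dot_self_nonneg' ((2:ℝ) • (s * y))
    rw [hT]; linarith
  have hS2nn : (0:ℝ) ≤ S2 := by rw [hS2]; linarith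
  have cs1 : (((2:ℝ) • G) * Δᵀ).trace ≤
      Real.sqrt (frobSq ((2:ℝ) • G)) * Real.sqrt (frobSq Δ) := cs_mat _ _
  have cs2 : ((2:ℝ) • (s * y)) ⬝ᵥ δ ≤
      Real.sqrt (((2:ℝ) • (s * y)) ⬝ᵥ ((2:ℝ) • (s * y))) * Real.sqrt (δ ⬝ᵥ δ) := cs_vec _ _
  have e1 : (((2:ℝ) • G) * Δᵀ).trace = 2 * ((Jm * S * Rh) * Δᵀ).trace := by
    rw [hG, Matrix.smul_mul, Matrix.trace_smul, smul_eq_mul]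
  have e2 : ((2:ℝ) • (s * y)) ⬝ᵥ δ = 2 * ((s * y) ⬝ᵥ δ) := by
    rw [smul_dotProduct, smul_eq_mul]
  have h2d : Real.sqrt (frobSq ((2:ℝ) • G)) * Real.sqrt (frobSq Δ)
      + Real.sqrt (((2:ℝ) • (s * y)) ⬝ᵥ ((2:ℝ) • (s * y))) * Real.sqrt (δ ⬝ᵥ δ)
      ≤ Real.sqrt T * Real.sqrt S2 := by
    set a1 := Real.sqrt (frobSq ((2:ℝ) • G)) with ha1
    set b1 := Real.sqrt (frobSq Δ) with hb1'
    set a2 := Real.sqrt (((2:ℝ) • (s * y)) ⬝ᵥ ((2:ℝ) • (s * y))) with ha2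
    set b2 := Real.sqrt (δ ⬝ᵥ δ) with hb2'
    have ha1nn : 0 ≤ a1 := Real.sqrt_nonneg _
    have hb1nn : 0 ≤ b1 := Real.sqrt_nonneg _
    have ha2nn : 0 ≤ a2 := Real.sqrt_nonneg _
    have hb2nn : 0 ≤ b2 := Real.sqrt_nonneg _
    have ha1sq : a1 ^ 2 = frobSq ((2:ℝ) • G) := Real.sq_sqrt (frobSq_nonneg _)
    have hb1sq : b1 ^ 2 = frobSq Δ := Real.sq_sqrt hfrΔ
    have ha2sq : a2 ^ 2 = ((2:ℝ) • (s * y)) ⬝ᵥ ((2:ℝ) • (s * y)) :=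
      Real.sq_sqrt (dot_self_nonneg' _)
    have hb2sq : b2 ^ 2 = δ ⬝ᵥ δ := Real.sq_sqrt hδδ
    have hsq : (a1 * b1 + a2 * b2) ^ 2 ≤ T * S2 := by
      have h0 : (a1 * b1 + a2 * b2) ^ 2 ≤ (a1 ^ 2 + a2 ^ 2) * (b1 ^ 2 + b2 ^ 2) := by
        have hring : (a1 ^ 2 + a2 ^ 2) * (b1 ^ 2 + b2 ^ 2)
            = (a1 * b1 + a2 * b2) ^ 2 + (a1 * b2 - a2 * b1) ^ 2 := by ring
        have hpos := sq_nonneg (a1 * b2 - a2 * b1)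
        linarith
      have hTeq : T = a1 ^ 2 + a2 ^ 2 := by rw [ha1sq, ha2sq, hT]
      have hS2eq : S2 = b1 ^ 2 + b2 ^ 2 := by rw [hb1sq, hb2sq, hS2]
      rw [hTeq, hS2eq]; exact h0
    have hnn : 0 ≤ a1 * b1 + a2 * b2 := by positivity
    calc a1 * b1 + a2 * b2 = Real.sqrt ((a1 * b1 + a2 * b2) ^ 2) :=
          (Real.sqrt_sq hnn).symm
      _ ≤ Real.sqrt (T * S2) := Real.sqrt_le_sqrt hsq
      _ = Real.sqrt T * Real.sqrt S2 := Real.sqrt_mul hTnn _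
  have hPup : P ≤ Real.sqrt T * Real.sqrt S2 := by
    rw [hP, ← e1, ← e2]
    exact le_trans (add_le_add cs1 cs2) h2d
  show σh * Real.sqrt S2 ≤ Real.sqrt T
  rcases eq_or_lt_of_le (Real.sqrt_nonneg S2) with hz | hpos
  · rw [← hz, mul_zero]; exact Real.sqrt_nonneg T
  · have hss : S2 = Real.sqrt S2 * Real.sqrt S2 := (Real.mul_self_sqrt hS2nn).symm
    have hmul : (σh * Real.sqrt S2) * Real.sqrt S2 ≤ Real.sqrt T * Real.sqrt S2 := by
      calc (σh * Real.sqrt S2) * Real.sqrt S2 = σh * S2 := by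
            rw [mul_assoc, Real.mul_self_sqrt hS2nn]
        _ ≤ P := hPlow
        _ ≤ Real.sqrt T * Real.sqrt S2 := hPup
    exact le_of_mul_le_mul_right hmul hpos

end
end

section
/- Let X ∈ Sⁿ be positive semidefinite with rank(X) = r, and suppose its leading k×k block equals I_k (so necessarily k ≤ r). Then there exists R̂ ∈ ℝ^{n×r} whose first k rows equal I_{k,r} := [I_k, 0_{k×(r−k)}] such that X = R̂R̂ᵀ. -/
/-!
Write `X = SᴴS` with `S = √X`, so that `X` is the Gram matrix of the columns `v i` of `S`, and
these span a space `W` of dimension `rank X = r`. The block condition says that `v` restricted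
to the first `k` indices is orthonormal; extend it to an orthonormal basis `b` of `W`. The matrix
of coordinates `R̂ i j = ⟪b j, v i⟫` then satisfies `R̂R̂ᵀ = X`, and its first `k` rows are
`I_{k,r}` because `v a = b a` for `a < k`.
-/

open Matrix Module Submodule
open scoped MatrixOrder ComplexOrder

noncomputable section

section

variable {𝕜 : Type*} [RCLike 𝕜]

namespace Matrix

theorem gram_toLp_col_eq_conjTranspose_mul {m n : Type*} [Fintype m] (B : Matrix m n 𝕜) :
    gram 𝕜 (fun j => WithLp.toLp 2 (B.col j)) = Bᴴ * B := by
  ext i j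
  simp [gram_apply, EuclideanSpace.inner_eq_star_dotProduct, mul_apply, dotProduct, mul_comm]

theorem finrank_span_range_toLp_col {m n : Type*} [Fintype n] (B : Matrix m n 𝕜) :
    finrank 𝕜 (span 𝕜 (Set.range fun j => WithLp.toLp 2 (B.col j))) = B.rank := by
  rw [rank_eq_finrank_span_cols, ← (WithLp.linearEquiv 2 𝕜 (m → 𝕜)).symm.finrank_map_eq,
    map_span, ← Set.range_comp]
  rfl

theorem PosSemidef.exists_eq_conjTranspose_mul_self {n : Type*} [Fintype n]
    {X : Matrix n n 𝕜} (hX : X.PosSemidef) : ∃ S : Matrix n n 𝕜, X = Sᴴ * S := by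
  classical
  have hS : (CFC.sqrt X).PosSemidef := nonneg_iff_posSemidef.mp (CFC.sqrt_nonneg X)
  exact ⟨CFC.sqrt X, by
    rw [hS.isHermitian.eq, CFC.sqrt_mul_sqrt_self X (nonneg_iff_posSemidef.mpr hX)]⟩

theorem PosSemidef.exists_gram_eq {n : Type*} [Fintype n] {X : Matrix n n 𝕜}
    (hX : X.PosSemidef) :
    ∃ v : n → EuclideanSpace 𝕜 n, gram 𝕜 v = X ∧ finrank 𝕜 (span 𝕜 (Set.range v)) = X.rank := by
  obtain ⟨S, rfl⟩ := hX.exists_eq_conjTranspose_mul_self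
  exact ⟨fun j => WithLp.toLp 2 (S.col j), gram_toLp_col_eq_conjTranspose_mul S,
    by rw [finrank_span_range_toLp_col, rank_conjTranspose_mul_self]⟩

end Matrix

theorem Orthonormal.exists_orthonormalBasis_fin_extension {E : Type*} [NormedAddCommGroup E]
    [InnerProductSpace 𝕜 E] [FiniteDimensional 𝕜 E] {k r : ℕ} (hr : finrank 𝕜 E = r)
    {u : Fin k → E} (hu : Orthonormal 𝕜 u) :
    ∃ b : OrthonormalBasis (Fin r) 𝕜 E, ∀ a j, b.repr (u a) j = if (a : ℕ) = j then 1 else 0 := by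
  classical
  have hkr : k ≤ r := hr ▸ by simpa using hu.linearIndependent.fintype_card_le_finrank
  let v : Fin r → E := fun j => if h : (j : ℕ) < k then u ⟨j, h⟩ else 0
  let s : Set (Fin r) := {j | (j : ℕ) < k}
  have hv : Orthonormal 𝕜 (s.domRestrict v) := by
    convert hu.comp (fun j : s => (⟨j, j.2⟩ : Fin k))
      fun i j h => by simpa [Subtype.ext_iff, Fin.ext_iff] using h using 1
    funext j
    exact dif_pos j.2
  obtain ⟨b, hb⟩ := hv.exists_orthonormalBasis_extension_of_card_eq (by simpa using hr)
  refine ⟨b, fun a j => ?_⟩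
  have hba : b (Fin.castLE hkr a) = u a := by
    simp [hb (Fin.castLE hkr a) a.2, v]
  rw [← hba, b.repr_self, PiLp.single_apply]
  simp [Fin.ext_iff, eq_comm]

end

theorem Rhat_submatrix_inr {k nk r : ℕ} {B : Matrix (Fin k ⊕ Fin nk) (Fin r) ℝ}
    (hB : B.submatrix Sum.inl id = Ikr k r) : Rhat k (B.submatrix Sum.inr id) = B := by
  ext (a | b) j
  · simp [Rhat, ← hB]
  · simp [Rhat]

theorem exists_gram_eq_Rhat {E : Type*} [NormedAddCommGroup E] [InnerProductSpace ℝ E]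
    {k nk r : ℕ} {v : Fin k ⊕ Fin nk → E} (hr : finrank ℝ (span ℝ (Set.range v)) = r)
    (hv : Orthonormal ℝ (v ∘ Sum.inl)) :
    ∃ R : Matrix (Fin nk) (Fin r) ℝ, gram ℝ v = Rhat k R * (Rhat k R)ᵀ := by
  have : FiniteDimensional ℝ (span ℝ (Set.range v)) :=
    FiniteDimensional.span_of_finite ℝ (Set.finite_range v)
  let w : Fin k ⊕ Fin nk → span ℝ (Set.range v) := fun i => ⟨v i, subset_span ⟨i, rfl⟩⟩
  obtain ⟨b, hb⟩ := Orthonormal.exists_orthonormalBasis_fin_extension hr (u := w ∘ Sum.inl) hv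
  let B : Matrix (Fin k ⊕ Fin nk) (Fin r) ℝ := of fun i j => b.repr (w i) j
  refine ⟨B.submatrix Sum.inr id, ?_⟩
  rw [Rhat_submatrix_inr (B := B) (Matrix.ext hb), show gram ℝ v = gram ℝ w from rfl,
    gram_eq_conjTranspose_mul b]
  ext i j
  simp [B, mul_apply]

/-- factorization claim of Section 1.3 of the paper: a positive semidefinite
matrix `X` of rank `r` whose leading `k×k` block is the identity can be factorized as
`X = R̂R̂ᵀ` where the first `k` rows of `R̂ ∈ ℝ^{n×r}` are `I_{k,r} = [I_k, 0]`.
The dimension `n` is encoded as `Fin k ⊕ Fin nk` with `nk = n − k`. -/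
theorem stmt14 {k nk r : ℕ}
    (X : Matrix (Fin k ⊕ Fin nk) (Fin k ⊕ Fin nk) ℝ)
    (hX : X.PosSemidef) (hrank : X.rank = r)
    (hblock : X.submatrix Sum.inl Sum.inl = 1) :
    ∃ R : Matrix (Fin nk) (Fin r) ℝ, X = Rhat k R * (Rhat k R)ᵀ := by
  obtain ⟨v, rfl, hv⟩ := hX.exists_gram_eq
  exact exists_gram_eq_Rhat (hv.trans hrank) (gram_eq_one_iff_orthonormal.mp hblock)

end
end

section
/- Let R ∈ ℝ^{(n−k)×r}, y ∈ ℝᵖ, C ∈ Sⁿ, c ∈ ℝᵖ, λ, λ̂ ∈ ℝᵐ, H ∈ ℝ^{(n−k)×τ} and h ∈ ℝᵖ. For H' ∈ ℝ^{(n−k)×r} define ℒ_R(H') := (JᵀH')R̂ᵀ + R̂(JᵀH')ᵀ ∈ Sⁿ, and for (H', h') ∈ ℝ^{(n−k)×r} × ℝᵖ define DG(H', h') := 𝒜(ℒ_R(H')) + B(2·y∘h') ∈ ℝᵐ. Set (W, z) := (2·J·𝒜*(λ̂)·R̂, 2·(Bᵀλ̂)∘y) and (G_R, g_y) := (2·J·(C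 − 𝒜*(λ))·R̂, 2·(c − Bᵀλ)∘y). Assume DG(G_R, g_y) = 0 and DG(W, z) = −2·( 𝒜(Jᵀ H Hᵀ J) + B(h∘h) ). Then ⟨C, ℒ_R(W)⟩ + ⟨2·c∘y, z⟩ = −2·⟨λ, 𝒜(Jᵀ H Hᵀ J) + B(h∘h)⟩. -/
open Matrix

noncomputable section

lemma traceswap {N M : Type*} [Fintype N] [Fintype M] (X Y : Matrix N M ℝ) :
    (X * Yᵀ).trace = (Y * Xᵀ).trace := by
  rw [← Matrix.trace_transpose, Matrix.transpose_mul, Matrix.transpose_transpose,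
    Matrix.trace_mul_comm]

lemma keyLR {N : Type*} [Fintype N] {a b : ℕ}
    (S : Matrix N N ℝ) (hS : Sᵀ = S) (J' : Matrix (Fin a) N ℝ)
    (R' : Matrix N (Fin b) ℝ) (H' : Matrix (Fin a) (Fin b) ℝ) :
    (S * ((J'ᵀ * H') * R'ᵀ + R' * (J'ᵀ * H')ᵀ)ᵀ).trace
      = 2 * ((J' * S * R') * H'ᵀ).trace := by
  rw [Matrix.transpose_add, Matrix.mul_add, Matrix.trace_add]
  have h1 : (S * ((J'ᵀ * H') * R'ᵀ)ᵀ).trace = ((J' * S * R') * H'ᵀ).trace := by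
    rw [Matrix.transpose_mul, Matrix.transpose_mul, Matrix.transpose_transpose,
      Matrix.transpose_transpose]
    rw [← Matrix.mul_assoc, ← Matrix.mul_assoc]
    rw [Matrix.trace_mul_comm]
    rw [← Matrix.mul_assoc, ← Matrix.mul_assoc]
  have h2 : (S * (R' * (J'ᵀ * H')ᵀ)ᵀ).trace = ((J' * S * R') * H'ᵀ).trace := by
    rw [Matrix.transpose_mul, Matrix.transpose_transpose]
    rw [← Matrix.mul_assoc, ← Matrix.mul_assoc]
    rw [Matrix.trace_mul_comm]
    rw [← Matrix.mul_assoc, ← Matrix.mul_assoc]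
    have : R'ᵀ * S * J'ᵀ = (J' * S * R')ᵀ := by
      rw [Matrix.transpose_mul, Matrix.transpose_mul, hS, Matrix.mul_assoc]
    rw [this, ← Matrix.trace_transpose, Matrix.transpose_mul, Matrix.transpose_transpose,
      Matrix.trace_mul_comm]
  rw [h1, h2]; ring

lemma dotlem1 {p : ℕ} (b y g : Fin p → ℝ) :
    b ⬝ᵥ ((2:ℝ) • (y * g)) = g ⬝ᵥ ((2:ℝ) • (b * y)) := by
  simp only [dotProduct, Pi.smul_apply, Pi.mul_apply, smul_eq_mul]
  exact Finset.sum_congr rfl fun i _ => by ring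

lemma dotlem2 {p : ℕ} (c b y z : Fin p → ℝ) :
    ((2:ℝ) • (c * y)) ⬝ᵥ z - b ⬝ᵥ ((2:ℝ) • (y * z)) = ((2:ℝ) • ((c - b) * y)) ⬝ᵥ z := by
  simp only [dotProduct, Pi.smul_apply, Pi.mul_apply, Pi.sub_apply, smul_eq_mul,
    ← Finset.sum_sub_distrib]
  exact Finset.sum_congr rfl fun i _ => by ring

/-- equations (Sep_25_16)–(Sep_25_19) in the proof of Proposition 3.3:
the first-order term arising when escaping a saddle point by appending new columns `(H, h)`. -/
theorem stmt15 {k nk r p m τ : ℕ}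
    (A : Matrix (Fin k ⊕ Fin nk) (Fin k ⊕ Fin nk) ℝ →ₗ[ℝ] (Fin m → ℝ))
    (Astar : (Fin m → ℝ) →ₗ[ℝ] Matrix (Fin k ⊕ Fin nk) (Fin k ⊕ Fin nk) ℝ)
    (hadj : ∀ X lam, A X ⬝ᵥ lam = (X * (Astar lam)ᵀ).trace)
    (hAstarSymm : ∀ lam, (Astar lam)ᵀ = Astar lam)
    (B : Matrix (Fin m) (Fin p) ℝ)
    (R : Matrix (Fin nk) (Fin r) ℝ) (y : Fin p → ℝ)
    (C : Matrix (Fin k ⊕ Fin nk) (Fin k ⊕ Fin nk) ℝ) (hC : Cᵀ = C)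
    (c : Fin p → ℝ) (lam lamhat : Fin m → ℝ)
    (H : Matrix (Fin nk) (Fin τ) ℝ) (h : Fin p → ℝ) :
    -- `ℒ_R(H') = (JᵀH')R̂ᵀ + R̂(JᵀH')ᵀ`
    let LR : Matrix (Fin nk) (Fin r) ℝ → Matrix (Fin k ⊕ Fin nk) (Fin k ⊕ Fin nk) ℝ :=
      fun H' => ((Jmat k nk)ᵀ * H') * (Rhat k R)ᵀ + Rhat k R * ((Jmat k nk)ᵀ * H')ᵀ
    -- `DG(H', h') = 𝒜(ℒ_R(H')) + B(2·y∘h')`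
    let DG : Matrix (Fin nk) (Fin r) ℝ → (Fin p → ℝ) → (Fin m → ℝ) :=
      fun H' h' => A (LR H') + B *ᵥ ((2 : ℝ) • (y * h'))
    -- `(W, z) = DG*[λ̂]`, the second-order correction of the retraction
    let W : Matrix (Fin nk) (Fin r) ℝ := (2 : ℝ) • (Jmat k nk * Astar lamhat * Rhat k R)
    let z : Fin p → ℝ := (2 : ℝ) • ((Bᵀ *ᵥ lamhat) * y)
    -- `(G_R, g_y)`, the Riemannian gradient of the factorized objective
    let GR : Matrix (Fin nk) (Fin r) ℝ := (2 : ℝ) • (Jmat k nk * (C - Astar lam) * Rhat k R)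
    let gy : Fin p → ℝ := (2 : ℝ) • ((c - Bᵀ *ᵥ lam) * y)
    DG GR gy = 0 →
    DG W z = (-2 : ℝ) • (A ((Jmat k nk)ᵀ * (H * Hᵀ) * Jmat k nk) + B *ᵥ (h * h)) →
    (C * (LR W)ᵀ).trace + ((2 : ℝ) • (c * y)) ⬝ᵥ z =
      (-2 : ℝ) * (lam ⬝ᵥ (A ((Jmat k nk)ᵀ * (H * Hᵀ) * Jmat k nk) + B *ᵥ (h * h))) := by
  intro LR DG W z GR gy h0 hW
  set J := Jmat k nk with hJ
  set Rh := Rhat k R with hRh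
  set F := A (Jᵀ * (H * Hᵀ) * J) + B *ᵥ (h * h) with hF
  have hS : (C - Astar lam)ᵀ = C - Astar lam := by
    rw [Matrix.transpose_sub, hC, hAstarSymm]
  -- dot-product with a multiplier, expanded
  have expand : ∀ (mu : Fin m → ℝ) (X : Matrix (Fin nk) (Fin r) ℝ) (x : Fin p → ℝ),
      mu ⬝ᵥ DG X x = ((LR X) * (Astar mu)ᵀ).trace + (Bᵀ *ᵥ mu) ⬝ᵥ ((2:ℝ) • (y * x)) := by
    intro mu X x
    show mu ⬝ᵥ (A (LR X) + B *ᵥ ((2:ℝ) • (y * x))) = _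
    rw [dotProduct_add, dotProduct_comm mu (A (LR X)), hadj, Matrix.dotProduct_mulVec,
      ← Matrix.mulVec_transpose]
  have key1 : ∀ (S : Matrix (Fin k ⊕ Fin nk) (Fin k ⊕ Fin nk) ℝ), Sᵀ = S →
      ∀ H', (S * (LR H')ᵀ).trace = 2 * ((J * S * Rh) * H'ᵀ).trace := by
    intro S hs H'
    exact keyLR S hs J Rh H'
  -- consequence of DG (GR, gy) = 0
  have e0 : (GR * Wᵀ).trace + gy ⬝ᵥ z = 0 := by
    have h' : lamhat ⬝ᵥ DG GR gy = 0 := by rw [h0]; simp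
    rw [expand] at h'
    have t1 : ((LR GR) * (Astar lamhat)ᵀ).trace = (GR * Wᵀ).trace := by
      rw [← traceswap, key1 (Astar lamhat) (hAstarSymm lamhat) GR]
      show 2 * ((J * Astar lamhat * Rh) * (((2:ℝ) • (J * (C - Astar lam) * Rh))ᵀ)).trace
          = (((2:ℝ) • (J * (C - Astar lam) * Rh)) * (((2:ℝ) • (J * Astar lamhat * Rh))ᵀ)).trace
      simp only [Matrix.transpose_smul, Matrix.mul_smul, Matrix.smul_mul,
        Matrix.trace_smul, smul_eq_mul]
      rw [traceswap]
    have t2 : (Bᵀ *ᵥ lamhat) ⬝ᵥ ((2:ℝ) • (y * gy)) = gy ⬝ᵥ z := by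
      show _ = gy ⬝ᵥ ((2:ℝ) • ((Bᵀ *ᵥ lamhat) * y))
      exact dotlem1 _ _ _
    rw [t1, t2] at h'
    exact h'
  -- consequence of DG (W, z) = -2 (...)
  have e1 : ((LR W) * (Astar lam)ᵀ).trace + (Bᵀ *ᵥ lam) ⬝ᵥ ((2:ℝ) • (y * z))
      = (-2:ℝ) * (lam ⬝ᵥ F) := by
    have h' : lam ⬝ᵥ DG W z = lam ⬝ᵥ ((-2:ℝ) • F) := by rw [hW]
    have hr : lam ⬝ᵥ ((-2:ℝ) • F) = (-2:ℝ) * (lam ⬝ᵥ F) := by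
      rw [dotProduct_smul, smul_eq_mul]
    rw [expand, hr] at h'
    exact h'
  -- trace difference
  have K1 : (C * (LR W)ᵀ).trace - ((LR W) * (Astar lam)ᵀ).trace = (GR * Wᵀ).trace := by
    have : (C * (LR W)ᵀ).trace - ((LR W) * (Astar lam)ᵀ).trace
        = ((C - Astar lam) * (LR W)ᵀ).trace := by
      rw [Matrix.sub_mul, Matrix.trace_sub, traceswap (LR W) (Astar lam)]
    rw [this, key1 (C - Astar lam) hS W]
    show _ = (((2:ℝ) • (J * (C - Astar lam) * Rh)) * Wᵀ).trace
    rw [Matrix.smul_mul, Matrix.trace_smul, smul_eq_mul]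
  -- scalar difference
  have K2 : ((2:ℝ) • (c * y)) ⬝ᵥ z - (Bᵀ *ᵥ lam) ⬝ᵥ ((2:ℝ) • (y * z)) = gy ⬝ᵥ z := by
    show _ = ((2:ℝ) • ((c - Bᵀ *ᵥ lam) * y)) ⬝ᵥ z
    exact dotlem2 _ _ _ _
  linarith [e0, e1, K1, K2]

end
end
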